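/- arXiv:1301.0961 — 8 statements merged into one kernel-verified Lean document; each statement's English description precedes it below -/
import Mathlib

section
/- A left R-module M is torsion-free (in Hattori's sense) if and only if Tor_1^R(R/rR, M) = 0 for all r ∈ R. -/
open MulOpposite

section CTensor
variable (R : Type) [Ring R]
variable (N : Type) [AddCommGroup N] [Module Rᵐᵒᵖ N]
variable (M : Type) [AddCommGroup M] [Module R M]

def tensorRels : AddSubgroup (FreeAbelianGroup (N × M)) :=
  AddSubgroup.closure
    {x | (∃ n n' m, x = FreeAbelianGroup.of (n + n', m) - FreeAbelianGroup.of (n, m) -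
            FreeAbelianGroup.of (n', m)) ∨
         (∃ n m m', x = FreeAbelianGroup.of (n, m + m') - FreeAbelianGroup.of (n, m) -
            FreeAbelianGroup.of (n, m')) ∨
         (∃ (r : R) (n : N) (m : M), x = FreeAbelianGroup.of (op r • n, m) -
            FreeAbelianGroup.of (n, r • m))}

abbrev CTensor : Type := FreeAbelianGroup (N × M) ⧸ tensorRels R N M

def ctmul (n : N) (m : M) : CTensor R N M :=
  QuotientAddGroup.mk (FreeAbelianGroup.of (n, m))

variable {R N M}

theorem ctmul_add_left (n n' : N) (m : M) :
    ctmul R N M (n + n') m = ctmul R N M n m + ctmul R N M n' m := by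
  rw [eq_comm, ← sub_eq_zero]
  show QuotientAddGroup.mk _ + QuotientAddGroup.mk _ - QuotientAddGroup.mk _ = (0 : CTensor R N M)
  rw [← QuotientAddGroup.mk_add, ← QuotientAddGroup.mk_sub, QuotientAddGroup.eq_zero_iff]
  have h : FreeAbelianGroup.of (n, m) + FreeAbelianGroup.of (n', m) -
      FreeAbelianGroup.of (n + n', m) =
      -(FreeAbelianGroup.of (n + n', m) - FreeAbelianGroup.of (n, m) -
        FreeAbelianGroup.of (n', m)) := by abel
  rw [h]
  exact neg_mem (AddSubgroup.subset_closure (Or.inl ⟨n, n', m, rfl⟩))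

theorem ctmul_add_right (n : N) (m m' : M) :
    ctmul R N M n (m + m') = ctmul R N M n m + ctmul R N M n m' := by
  rw [eq_comm, ← sub_eq_zero]
  show QuotientAddGroup.mk _ + QuotientAddGroup.mk _ - QuotientAddGroup.mk _ = (0 : CTensor R N M)
  rw [← QuotientAddGroup.mk_add, ← QuotientAddGroup.mk_sub, QuotientAddGroup.eq_zero_iff]
  have h : FreeAbelianGroup.of (n, m) + FreeAbelianGroup.of (n, m') -
      FreeAbelianGroup.of (n, m + m') =
      -(FreeAbelianGroup.of (n, m + m') - FreeAbelianGroup.of (n, m) -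
        FreeAbelianGroup.of (n, m')) := by abel
  rw [h]
  exact neg_mem (AddSubgroup.subset_closure (Or.inr (Or.inl ⟨n, m, m', rfl⟩)))

theorem ctmul_smul (r : R) (n : N) (m : M) :
    ctmul R N M (op r • n) m = ctmul R N M n (r • m) := by
  rw [← sub_eq_zero]
  show QuotientAddGroup.mk _ - QuotientAddGroup.mk _ = (0 : CTensor R N M)
  rw [← QuotientAddGroup.mk_sub, QuotientAddGroup.eq_zero_iff]
  apply AddSubgroup.subset_closure
  right; right
  exact ⟨r, n, m, rfl⟩

variable (R N M)

/-- Universal property: lift a balanced biadditive map to the balanced tensor product. -/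
def ctlift {A : Type} [AddCommGroup A] (f : N → M → A)
    (h1 : ∀ n n' m, f (n + n') m = f n m + f n' m)
    (h2 : ∀ n m m', f n (m + m') = f n m + f n m')
    (h3 : ∀ (r : R) n m, f (op r • n) m = f n (r • m)) :
    CTensor R N M →+ A :=
  QuotientAddGroup.lift _ (FreeAbelianGroup.lift fun p => f p.1 p.2) (by
    rw [tensorRels, AddSubgroup.closure_le]
    rintro x (⟨n, n', m, rfl⟩ | ⟨n, m, m', rfl⟩ | ⟨r, n, m, rfl⟩) <;>
      simp [AddMonoidHom.mem_ker, FreeAbelianGroup.lift_apply_of, h1, h2, h3])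

@[simp] theorem ctlift_ctmul {A : Type} [AddCommGroup A] (f : N → M → A) (h1) (h2) (h3)
    (n : N) (m : M) : ctlift R N M f h1 h2 h3 (ctmul R N M n m) = f n m := by
  simp [ctlift, ctmul, QuotientAddGroup.lift_mk, FreeAbelianGroup.lift_apply_of]

end CTensor

section Maps
variable (R : Type) [Ring R]

/-- Functoriality of the balanced tensor product in the right-module variable. -/
def ctmapLeft {N N' : Type} [AddCommGroup N] [Module Rᵐᵒᵖ N] [AddCommGroup N']
    [Module Rᵐᵒᵖ N'] (f : N →ₗ[Rᵐᵒᵖ] N') (M : Type) [AddCommGroup M] [Module R M] :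
    CTensor R N M →+ CTensor R N' M :=
  ctlift R N M (fun n m => ctmul R N' M (f n) m)
    (fun n n' m => by (try dsimp only); rw [map_add, ctmul_add_left])
    (fun n m m' => by (try dsimp only); rw [ctmul_add_right])
    (fun r n m => by (try dsimp only); rw [map_smul, ctmul_smul])

/-- Functoriality of the balanced tensor product in the left-module variable. -/
def ctmapRight (N : Type) [AddCommGroup N] [Module Rᵐᵒᵖ N] {M M' : Type} [AddCommGroup M]
    [Module R M] [AddCommGroup M'] [Module R M'] (f : M →ₗ[R] M') :
    CTensor R N M →+ CTensor R N M' :=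
  ctlift R N M (fun n m => ctmul R N M' n (f m))
    (fun n n' m => by (try dsimp only); rw [ctmul_add_left])
    (fun n m m' => by (try dsimp only); rw [map_add, ctmul_add_right])
    (fun r n m => by (try dsimp only); rw [ctmul_smul, map_smul])

/-- The canonical map `(∏ i, N i) ⊗ M → ∏ i, (N i ⊗ M)`. -/
def ctCanonical {ι : Type} (N : ι → Type) [∀ i, AddCommGroup (N i)]
    [∀ i, Module Rᵐᵒᵖ (N i)] (M : Type) [AddCommGroup M] [Module R M] :
    CTensor R (∀ i, N i) M →+ ∀ i, CTensor R (N i) M :=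
  ctlift R (∀ i, N i) M (fun n m i => ctmul R (N i) M (n i) m)
    (fun n n' m => by funext i; exact ctmul_add_left _ _ _)
    (fun n m m' => by funext i; exact ctmul_add_right _ _ _)
    (fun r n m => by funext i; exact ctmul_smul _ _ _)

end Maps

/-- A left `R`-module `M` is torsion-free in Hattori's sense: if `r • m = 0` then `m` lies in
`𝔯(r)·M`, the additive subgroup generated by products `s • y` with `r * s = 0`. -/
def IsHattoriTorsionFree (R M : Type) [Ring R] [AddCommGroup M] [Module R M] : Prop :=
  ∀ (r : R) (m : M), r • m = 0 →
    m ∈ AddSubgroup.closure {x : M | ∃ (s : R) (y : M), r * s = 0 ∧ x = s • y}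

/-- The canonical map `rR ⊗_R M → M` induced by the inclusion `rR → R` and the isomorphism
`R ⊗_R M ≅ M`.  The vanishing of `Tor₁ᴿ(R/rR, M)` is equivalent (via the short exact sequence
`0 → rR → R → R/rR → 0` and `Tor₁(R, M) = 0`) to the injectivity of this map. -/
def torMap (R : Type) [Ring R] (M : Type) [AddCommGroup M] [Module R M] (r : R) :
    CTensor R ↥(Submodule.span Rᵐᵒᵖ ({r} : Set R)) M →+ M :=
  ctlift R ↥(Submodule.span Rᵐᵒᵖ ({r} : Set R)) M (fun x m => (x : R) • m)
    (fun x y m => by (try dsimp only); rw [Submodule.coe_add, add_smul])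
    (fun x m m' => by (try dsimp only); rw [smul_add])
    (fun s x m => by
      try dsimp only
      rw [Submodule.coe_smul, MulOpposite.smul_eq_mul_unop, MulOpposite.unop_op, mul_smul])

/-!
Every element of `rR ⊗ M` is a pure tensor `r ⊗ m`, since `(r * a) ⊗ m = r ⊗ (a • m)`, and the
canonical map sends `r ⊗ m` to `r • m`. So injectivity of `rR ⊗ M → M` says exactly that
`r • m = 0` forces `r ⊗ m = 0`, and it remains to see that `r ⊗ m = 0` iff `m ∈ 𝔯(r)·M`. One
direction is `r ⊗ (s • y) = (r * s) ⊗ y`; for the other, `(r * a) ⊗ m ↦ [a • m]` is a well-defined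
map `rR ⊗ M → M ⧸ 𝔯(r)·M`, because `a` is determined by `r * a` up to `𝔯(r)`.
-/

section CTensorInduction

variable {R N M : Type} [Ring R] [AddCommGroup N] [Module Rᵐᵒᵖ N] [AddCommGroup M] [Module R M]

theorem ctmul_zero_left (m : M) : ctmul R N M 0 m = 0 := by
  have h := ctmul_add_left (R := R) (N := N) (M := M) 0 0 m
  rwa [add_zero, left_eq_add] at h

@[elab_as_elim]
theorem CTensor.induction_on {p : CTensor R N M → Prop} (z : CTensor R N M) (zero : p 0)
    (tmul : ∀ n m, p (ctmul R N M n m)) (neg : ∀ z, p z → p (-z))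
    (add : ∀ z w, p z → p w → p (z + w)) : p z := by
  induction z using QuotientAddGroup.induction_on with
  | H x =>
    induction x using FreeAbelianGroup.induction_on with
    | zero => exact zero
    | of nm => exact tmul nm.1 nm.2
    | neg x hx => exact neg _ hx
    | add x y hx hy => exact add _ _ hx hy

end CTensorInduction

theorem AddMonoidHom.injective_iff_of_surjective {A B C : Type*} [AddGroup A] [AddGroup B]
    [AddGroup C] {f : A →+ B} (hf : Function.Surjective f) (g : B →+ C) :
    Function.Injective g ↔ ∀ a, g (f a) = 0 → f a = 0 := by
  rw [injective_iff_map_eq_zero]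
  exact ⟨fun h a => h (f a), fun h b => by obtain ⟨a, rfl⟩ := hf b; exact h a⟩

section Hattori

variable {R M : Type} [Ring R] [AddCommGroup M] [Module R M]

abbrev principalRightIdeal (r : R) : Submodule Rᵐᵒᵖ R :=
  Submodule.span Rᵐᵒᵖ {r}

def spanSingletonGen (r : R) : principalRightIdeal r :=
  ⟨r, Submodule.mem_span_singleton_self r⟩

noncomputable def spanCoeff (r : R) (x : principalRightIdeal r) : R :=
  (Submodule.mem_span_singleton.mp x.2).choose.unop

theorem mul_spanCoeff (r : R) (x : principalRightIdeal r) : r * spanCoeff r x = x := by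
  simpa [MulOpposite.smul_eq_mul_unop, spanCoeff] using
    (Submodule.mem_span_singleton.mp x.2).choose_spec

theorem op_smul_spanSingletonGen (r a : R) :
    ((op a • spanSingletonGen r : principalRightIdeal r) : R) = r * a := by
  simp [spanSingletonGen, MulOpposite.smul_eq_mul_unop]

variable (M) in
/-- The subgroup `𝔯(r)·M` of `M`. -/
def rightAnnSmul (r : R) : AddSubgroup M :=
  AddSubgroup.closure {x : M | ∃ (s : R) (y : M), r * s = 0 ∧ x = s • y}

theorem sub_smul_mem_rightAnnSmul {r a b : R} (h : r * a = r * b) (m : M) :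
    a • m - b • m ∈ rightAnnSmul M r :=
  AddSubgroup.subset_closure ⟨a - b, m, by rw [mul_sub, h, sub_self], (sub_smul a b m).symm⟩

variable (M) in
def ctmulGen (r : R) : M →+ CTensor R (principalRightIdeal r) M :=
  AddMonoidHom.mk' (ctmul R _ M (spanSingletonGen r)) (ctmul_add_right _)

theorem ctmulGen_smul (r a : R) (m : M) :
    ctmulGen M r (a • m) = ctmul R (principalRightIdeal r) M (op a • spanSingletonGen r) m :=
  (ctmul_smul a _ m).symm

theorem ctmulGen_surjective (r : R) : Function.Surjective (ctmulGen M r) := by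
  intro z
  induction z using CTensor.induction_on with
  | zero => exact ⟨0, map_zero _⟩
  | tmul x m =>
    refine ⟨spanCoeff r x • m, ?_⟩
    rw [ctmulGen_smul]
    congr 1
    exact Subtype.ext (by rw [op_smul_spanSingletonGen, mul_spanCoeff])
  | neg z hz => exact (ctmulGen M r).range.neg_mem hz
  | add z w hz hw => exact (ctmulGen M r).range.add_mem hz hw

theorem torMap_ctmulGen (r : R) (m : M) : torMap R M r (ctmulGen M r m) = r • m :=
  ctlift_ctmul _ _ _ _ _ _ _ _ _

theorem rightAnnSmul_le_ker_ctmulGen (r : R) : rightAnnSmul M r ≤ (ctmulGen M r).ker := by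
  rw [rightAnnSmul, AddSubgroup.closure_le]
  rintro _ ⟨s, y, hrs, rfl⟩
  have h0 : (op s • spanSingletonGen r : principalRightIdeal r) = 0 :=
    Subtype.ext (by rw [op_smul_spanSingletonGen, hrs]; rfl)
  rw [SetLike.mem_coe, AddMonoidHom.mem_ker, ctmulGen_smul, h0, ctmul_zero_left]

theorem mk_smul_eq_of_mul_eq {r a b : R} (h : r * a = r * b) (m : M) :
    (↑(a • m) : M ⧸ rightAnnSmul M r) = ↑(b • m) :=
  QuotientAddGroup.eq_iff_sub_mem.mpr (sub_smul_mem_rightAnnSmul h m)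

noncomputable def ctmulGenInv (r : R) :
    CTensor R (principalRightIdeal r) M →+ M ⧸ rightAnnSmul M r :=
  ctlift R _ M (fun x m => ((spanCoeff r x • m : M) : M ⧸ rightAnnSmul M r))
    (fun x y m => by
      rw [← QuotientAddGroup.mk_add, ← add_smul]
      exact mk_smul_eq_of_mul_eq (by rw [mul_add, mul_spanCoeff, mul_spanCoeff, mul_spanCoeff,
        Submodule.coe_add]) m)
    (fun x m m' => by rw [smul_add]; rfl)
    (fun s x m => by
      rw [← mul_smul]
      exact mk_smul_eq_of_mul_eq (by rw [← mul_assoc, mul_spanCoeff, mul_spanCoeff,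
        Submodule.coe_smul, MulOpposite.smul_eq_mul_unop, unop_op]) m)

theorem ctmulGenInv_ctmulGen (r : R) (m : M) : ctmulGenInv r (ctmulGen M r m) = (m : M ⧸ _) := by
  rw [ctmulGen, AddMonoidHom.mk'_apply, ctmulGenInv, ctlift_ctmul, ← one_smul R m, smul_smul,
    mul_one]
  exact mk_smul_eq_of_mul_eq (by rw [mul_spanCoeff, mul_one]; rfl) m

theorem ker_ctmulGen (r : R) : (ctmulGen M r).ker = rightAnnSmul M r := by
  refine le_antisymm (fun m hm => ?_) (rightAnnSmul_le_ker_ctmulGen r)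
  have h := congrArg (ctmulGenInv r) ((ctmulGen M r).mem_ker.mp hm)
  rwa [ctmulGenInv_ctmulGen, map_zero, QuotientAddGroup.eq_zero_iff] at h

end Hattori

/-- **Hattori.** A left `R`-module `M` is torsion-free (in Hattori's sense) if and only if
`Tor₁ᴿ(R/rR, M) = 0` for all `r ∈ R`, the latter being expressed by the injectivity of the
canonical map `rR ⊗_R M → M`. -/
theorem hattori_torsionFree_iff_tor_vanishes (R M : Type) [Ring R] [AddCommGroup M]
    [Module R M] :
    IsHattoriTorsionFree R M ↔ ∀ r : R, Function.Injective (torMap R M r) := by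
  refine forall_congr' fun r => ?_
  rw [AddMonoidHom.injective_iff_of_surjective (ctmulGen_surjective r)]
  simp only [torMap_ctmulGen, ← AddMonoidHom.mem_ker, ker_ctmulGen]
  rfl
end

section
/- A left R-module M is divisible (in Hattori's sense) if and only if Ext^1_R(R/Rr, M) = 0 for all r ∈ R. -/
open CategoryTheory

/-- A left `R`-module `M` is divisible in Hattori's sense: whenever `m` is annihilated by the
left annihilator `𝔩(r)` of `r`, there is `m'` with `m = r • m'`. -/
def IsHattoriDivisible (R M : Type) [Ring R] [AddCommGroup M] [Module R M] : Prop :=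
  ∀ (r : R) (m : M), (∀ s : R, s * r = 0 → s • m = 0) → ∃ m' : M, m = r • m'

/-!
Extending the presentation `R --(· * r)--> R → R ⧸ Rr → 0` by syzygies gives a projective
resolution `P` of `R ⧸ Rr`, so `Ext¹(R ⧸ Rr, M)` is the first cohomology of `Hom(P, M)`.
A 1-cocycle is a map `φ : R → M` killed by `d₂`; since `P₂` covers `ker d₁`, this means
that `φ` vanishes on `ker (· * r) = 𝔩(r)`, i.e. `𝔩(r) • φ 1 = 0`. It is a coboundary iff
`φ` factors through `· * r`, i.e. iff `φ 1 = r • m'` for some `m'`.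
-/

universe u v

open Limits

section Abelian

variable {C : Type*} [Category C] [Abelian C]

lemma ChainComplex.linearYonedaObj_exactAt_succ_iff (K : ChainComplex C ℕ) (A : Type*) [Ring A]
    [Linear A C] (Y : C) (n : ℕ) :
    (K.linearYonedaObj A Y).ExactAt (n + 1) ↔
      ∀ φ : K.X (n + 1) ⟶ Y, K.d (n + 2) (n + 1) ≫ φ = 0 →
        ∃ ψ : K.X n ⟶ Y, K.d (n + 1) n ≫ ψ = φ := by
  rw [HomologicalComplex.exactAt_iff' _ n (n + 1) (n + 2) (by simp) (by simp),
    ShortComplex.moduleCat_exact_iff]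
  rfl

lemma CategoryTheory.ShortComplex.Exact.f_comp_eq_zero_iff {S : ShortComplex C} (hS : S.Exact)
    {Y : C} (φ : S.X₂ ⟶ Y) : S.f ≫ φ = 0 ↔ kernel.ι S.g ≫ φ = 0 := by
  have := hS.epi_kernelLift
  rw [← kernel.lift_ι S.g S.f S.zero, Category.assoc, comp_eq_zero_iff_of_epi]

namespace CategoryTheory.ProjectiveResolution

variable [EnoughProjectives C]

theorem isZero_Ext_one_iff {X : C} (P : ProjectiveResolution X) (A : Type*) [Ring A]
    [Linear A C] (Y : C) :
    IsZero (((Ext A C 1).obj (Opposite.op X)).obj Y) ↔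
      ∀ φ : P.complex.X 1 ⟶ Y, kernel.ι (P.complex.d 1 0) ≫ φ = 0 →
        ∃ ψ : P.complex.X 0 ⟶ Y, P.complex.d 1 0 ≫ ψ = φ := by
  rw [(P.isoExt 1 Y).isZero_iff, ← HomologicalComplex.exactAt_iff_isZero_homology,
    ChainComplex.linearYonedaObj_exactAt_succ_iff]
  have hP := P.complex_exactAt_succ 0
  rw [HomologicalComplex.exactAt_iff' _ 2 1 0 (by simp) (by simp)] at hP
  exact forall_congr' fun φ => imp_congr_left (hP.f_comp_eq_zero_iff φ)

noncomputable def syzygiesStep {X₀ X₁ : C} (f : X₁ ⟶ X₀) :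
    Σ' (X₂ : C) (d : X₂ ⟶ X₁), d ≫ f = 0 :=
  ⟨_, Projective.d f, by erw [Category.assoc, kernel.condition, comp_zero]⟩

variable (S : ShortComplex C)

noncomputable def ofPresentationComplex : ChainComplex C ℕ :=
  ChainComplex.mk' S.X₂ S.X₁ S.f syzygiesStep

lemma ofPresentationComplex_d_1_0 : (ofPresentationComplex S).d 1 0 = S.f :=
  ChainComplex.mk'_d_1_0 ..

lemma ofPresentationComplex_exactAt_succ (n : ℕ) :
    (ofPresentationComplex S).ExactAt (n + 1) := by
  rw [HomologicalComplex.exactAt_iff' _ (n + 2) (n + 1) n (by simp) (by simp)]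
  refine ShortComplex.exact_of_iso ?_ (exact_d_f ((ofPresentationComplex S).d (n + 1) n))
  unfold ofPresentationComplex
  let K := ChainComplex.mk' S.X₂ S.X₁ S.f syzygiesStep
  let e := ChainComplex.mk'XIso S.X₂ S.X₁ S.f syzygiesStep n
  refine ShortComplex.isoMk e.symm (Iso.refl _) (Iso.refl _) ?_ ?_
  · change e.inv ≫ K.d (n + 2) (n + 1) =
      (syzygiesStep (K.d (n + 1) n)).2.1 ≫ 𝟙 (K.X (n + 1))
    rw [ChainComplex.mk'_d, Iso.inv_hom_id_assoc, Category.comp_id]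
  · exact (Category.id_comp _).trans (Category.comp_id _).symm

variable [Projective S.X₁] [Projective S.X₂]

instance (n : ℕ) : Projective ((ofPresentationComplex S).X n) := by
  obtain (_ | _ | _ | n) := n
  · assumption
  · assumption
  all_goals apply Projective.projective_over

noncomputable def ofPresentation (hS : S.Exact) [Epi S.g] : ProjectiveResolution S.X₃ where
  complex := ofPresentationComplex S
  π := (ChainComplex.toSingle₀Equiv _ _).symm ⟨S.g, by
    rw [ofPresentationComplex_d_1_0]; exact S.zero⟩
  quasiIso := ⟨fun n => by
    cases n with
    | zero =>
      rw [ChainComplex.quasiIsoAt₀_iff, ShortComplex.quasiIso_iff_of_zeros']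
      · refine (ShortComplex.exact_and_epi_g_iff_of_iso ?_).2 ⟨hS, inferInstance⟩
        refine ShortComplex.isoMk (Iso.refl _) (Iso.refl _) (Iso.refl _) ?_ ?_
        · exact (Category.id_comp _).trans
            ((ofPresentationComplex_d_1_0 S).symm.trans (Category.comp_id _).symm)
        · exact (Category.id_comp _).trans
            ((ChainComplex.toSingle₀Equiv_symm_apply_f_zero
              (C := ofPresentationComplex S) S.g _).symm.trans (Category.comp_id _).symm)
      all_goals rfl
    | succ n =>
      rw [quasiIsoAt_iff_exactAt']
      · exact ofPresentationComplex_exactAt_succ S n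
      · exact ChainComplex.exactAt_succ_single_obj _ n⟩

end CategoryTheory.ProjectiveResolution

theorem isZero_Ext_one_iff_of_exact [EnoughProjectives C] {S : ShortComplex C} (hS : S.Exact)
    [Epi S.g] [Projective S.X₁] [Projective S.X₂] (A : Type*) [Ring A] [Linear A C] (Y : C) :
    IsZero (((Ext A C 1).obj (Opposite.op S.X₃)).obj Y) ↔
      ∀ φ : S.X₁ ⟶ Y, kernel.ι S.f ≫ φ = 0 → ∃ ψ : S.X₂ ⟶ Y, S.f ≫ ψ = φ := by
  rw [(ProjectiveResolution.ofPresentation S hS).isZero_Ext_one_iff]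
  exact ProjectiveResolution.ofPresentationComplex_d_1_0 S ▸ Iff.rfl

end Abelian

lemma ModuleCat.kernel_ι_comp_eq_zero_iff {R : Type*} [Ring R] {M N P : ModuleCat.{v} R}
    (f : M ⟶ N) (φ : M ⟶ P) :
    kernel.ι f ≫ φ = 0 ↔ LinearMap.ker f.hom ≤ LinearMap.ker φ.hom := by
  rw [← comp_eq_zero_iff_of_epi (ModuleCat.kernelIsoKer f).inv, ← Category.assoc,
    ModuleCat.kernelIsoKer_inv_kernel_ι, LinearMap.le_ker_iff_comp_subtype_eq_zero]
  exact ⟨congrArg ModuleCat.Hom.hom, fun h => ModuleCat.hom_ext h⟩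

namespace LinearMap

variable {R M : Type*} [Ring R] [AddCommGroup M] [Module R M]

lemma ker_toSpanSingleton_le_ker_iff (r : R) (φ : R →ₗ[R] M) :
    ker (toSpanSingleton R R r) ≤ ker φ ↔ ∀ s : R, s * r = 0 → s • φ 1 = 0 := by
  refine forall_congr' fun s => ?_
  simp [← map_smul]

lemma exists_comp_toSpanSingleton_eq_iff (r : R) (φ : R →ₗ[R] M) :
    (∃ ψ : R →ₗ[R] M, ψ ∘ₗ toSpanSingleton R R r = φ) ↔ ∃ m : M, φ 1 = r • m := by
  constructor
  · rintro ⟨ψ, rfl⟩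
    exact ⟨ψ 1, by simp [← map_smul]⟩
  · rintro ⟨m, hm⟩
    exact ⟨toSpanSingleton R M m, ext_ring (by simp [hm])⟩

end LinearMap

namespace ModuleCat

variable {R : Type u} [Ring R]

noncomputable abbrev cyclicPresentation (r : R) : ShortComplex (ModuleCat R) :=
  ShortComplex.mk (ofHom (LinearMap.toSpanSingleton R R r)) (ofHom (Ideal.span {r}).mkQ) <| by
    ext; simp

lemma cyclicPresentation_exact (r : R) : (cyclicPresentation r).Exact := by
  rw [ShortComplex.moduleCat_exact_iff_range_eq_ker]
  exact (LinearMap.span_singleton_eq_range R R r).symm.trans (Submodule.ker_mkQ _).symm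

instance (r : R) : Epi (cyclicPresentation r).g :=
  (epi_iff_surjective _).2 (Submodule.mkQ_surjective _)

lemma cyclicPresentation_extend_iff {M : Type u} [AddCommGroup M] [Module R M] (r : R) :
    (∀ φ : (cyclicPresentation r).X₁ ⟶ of R M, kernel.ι (cyclicPresentation r).f ≫ φ = 0 →
        ∃ ψ : (cyclicPresentation r).X₂ ⟶ of R M, (cyclicPresentation r).f ≫ ψ = φ) ↔
      ∀ m : M, (∀ s : R, s * r = 0 → s • m = 0) → ∃ m' : M, m = r • m' := by
  constructor
  · intro h m hm
    let φ : of R R ⟶ of R M := ofHom (LinearMap.toSpanSingleton R M m)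
    have hφ : φ.hom 1 = m := one_smul R m
    obtain ⟨ψ, hψ⟩ := h φ ((kernel_ι_comp_eq_zero_iff _ _).2
      ((LinearMap.ker_toSpanSingleton_le_ker_iff r _).2 (hφ ▸ hm)))
    rw [← hφ]
    exact (LinearMap.exists_comp_toSpanSingleton_eq_iff r _).1 ⟨ψ.hom, congrArg Hom.hom hψ⟩
  · intro h φ hφ
    obtain ⟨ψ, hψ⟩ := (LinearMap.exists_comp_toSpanSingleton_eq_iff r φ.hom).2
      (h _ ((LinearMap.ker_toSpanSingleton_le_ker_iff r _).1
        ((kernel_ι_comp_eq_zero_iff _ _).1 hφ)))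
    exact ⟨ofHom ψ, hom_ext hψ⟩

end ModuleCat

/-- **Hattori.** A left `R`-module `M` is divisible (in Hattori's sense) if and only if
`Ext¹_R(R/Rr, M) = 0` for all `r ∈ R`. -/
theorem hattori_divisible_iff_ext_vanishes (R M : Type) [Ring R] [AddCommGroup M]
    [Module R M] :
    IsHattoriDivisible R M ↔
      ∀ r : R,
        Subsingleton
          (((Ext ℤ (ModuleCat R) 1).obj
              (Opposite.op (ModuleCat.of R (R ⧸ Ideal.span ({r} : Set R))))).obj
            (ModuleCat.of R M)) := by
  refine forall_congr' fun r => ?_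
  rw [← ModuleCat.isZero_iff_subsingleton]
  exact ((isZero_Ext_one_iff_of_exact (ModuleCat.cyclicPresentation_exact r) ℤ _).trans
    (ModuleCat.cyclicPresentation_extend_iff r)).symm
end

section
/- If the class of torsion-free left R-modules is closed under arbitrary direct products, then R is right P-coherent, i.e., the right annihilator of every element of R is a finitely generated right ideal. -/
/-- The right annihilator `𝔯(r) = {s : r * s = 0}` of `r`, as a right ideal of `R`
(i.e. an `Rᵐᵒᵖ`-submodule of `R`). -/
def rightAnnihilator (R : Type) [Ring R] (r : R) : Submodule Rᵐᵒᵖ R where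
  carrier := {s : R | r * s = 0}
  add_mem' := by intro a b ha hb; simp only [Set.mem_setOf_eq] at *; rw [mul_add, ha, hb, add_zero]
  zero_mem' := by simp
  smul_mem' := by
    intro c x hx
    simp only [Set.mem_setOf_eq, MulOpposite.smul_eq_mul_unop] at *
    rw [← mul_assoc, hx, zero_mul]

section

variable {R : Type} [Ring R]

lemma isHattoriTorsionFree_self : IsHattoriTorsionFree R R :=
  fun _ m hm => AddSubgroup.subset_closure ⟨m, 1, by simpa using hm, (mul_one m).symm⟩

lemma exists_finite_forall_apply_mem_span_of_mem_closure_smul {ι : Type} {S : Set R}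
    {x : ι → R}
    (hx : x ∈ AddSubgroup.closure {z : ι → R | ∃ (s : R) (y : ι → R), s ∈ S ∧ z = s • y}) :
    ∃ F ⊆ S, F.Finite ∧ ∀ i, x i ∈ Submodule.span Rᵐᵒᵖ F := by
  induction hx using AddSubgroup.closure_induction with
  | mem z hz =>
    obtain ⟨s, y, hs, rfl⟩ := hz
    exact ⟨{s}, Set.singleton_subset_iff.mpr hs, Set.finite_singleton s,
      fun i => Submodule.mem_span_singleton.mpr ⟨MulOpposite.op (y i), rfl⟩⟩
  | zero => exact ⟨∅, Set.empty_subset S, Set.finite_empty, fun _ => zero_mem _⟩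
  | add a b _ _ ha hb =>
    obtain ⟨F, hFS, hF, ha⟩ := ha
    obtain ⟨G, hGS, hG, hb⟩ := hb
    exact ⟨F ∪ G, Set.union_subset hFS hGS, hF.union hG, fun i =>
      add_mem (Submodule.span_mono Set.subset_union_left (ha i))
        (Submodule.span_mono Set.subset_union_right (hb i))⟩
  | neg a _ ha =>
    obtain ⟨F, hFS, hF, ha⟩ := ha
    exact ⟨F, hFS, hF, fun i => neg_mem (ha i)⟩

end

/-- If the class of torsion-free left `R`-modules is closed under arbitrary direct products,
then `R` is right P-coherent: every right annihilator `𝔯(r)` is a finitely generated right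
ideal. -/
theorem pCoherent_of_torsionFree_closed_under_products (R : Type) [Ring R]
    (h : ∀ (ι : Type) (M : ι → Type) (_ : ∀ i, AddCommGroup (M i))
      (_ : ∀ i, Module R (M i)),
      (∀ i, IsHattoriTorsionFree R (M i)) → IsHattoriTorsionFree R (∀ i, M i)) :
    ∀ r : R, (rightAnnihilator R r).FG := by
  intro r
  let I := rightAnnihilator R r
  have htf : IsHattoriTorsionFree R (I → R) :=
    h I (fun _ => R) _ _ fun _ => isHattoriTorsionFree_self
  have hr : r • (Subtype.val : I → R) = 0 := funext fun s => s.2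
  have hmem : (Subtype.val : I → R) ∈
      AddSubgroup.closure {z | ∃ (s : R) (y : I → R), s ∈ (I : Set R) ∧ z = s • y} :=
    htf r _ hr
  obtain ⟨F, hFI, hF, hspan⟩ := exists_finite_forall_apply_mem_span_of_mem_closure_smul hmem
  exact Submodule.fg_def.mpr
    ⟨F, hF, le_antisymm (Submodule.span_le.mpr hFI) fun s hs => hspan ⟨s, hs⟩⟩
end

section
/- If every countably generated left ideal of R is projective (R is left countably hereditary), then every projective left R-module is ℵ₁-projective, i.e., all its countably generated submodules are projective. -/
/-- A submodule is countably generated if it is the span of a countable set. -/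
def CountablyGenerated (R : Type) {M : Type} [Ring R] [AddCommGroup M] [Module R M]
    (A : Submodule R M) : Prop :=
  ∃ S : Set M, S.Countable ∧ Submodule.span R S = A

/-!
Embed `P` in a free module; a countably generated `A ≤ P` then lies in `ℕ →₀ R` after renaming
the countably many coordinates its generators involve. Filter by `Aₖ = A ∩ R^(<k)`. The `k`-th
coordinate maps `Aₖ₊₁` onto a left ideal with kernel `Aₖ`; when this ideal is countably
generated it is projective, so `Aₖ₊₁ = Aₖ ⊕ Dₖ` with `Dₖ` projective, and `A = ⨁ₖ Dₖ`.
The ideal is countably generated because `Aₖ₊₁` is the union of the `B ∩ R^(<k+1)` over the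
countably many `B` spanned by finitely many generators of `A`, and each of these is finitely
generated: `B ≤ R^(<n)` for some `n`, and the finitely generated (hence projective) coordinate
ideals of `B` split off one at a time from the top down.
-/

open Submodule LinearMap Finsupp Set Function

def IsLeftCountablyHereditary (R : Type) [Ring R] : Prop :=
  ∀ I : Ideal R, CountablyGenerated R I → Module.Projective R I

section General

variable {R : Type} [Ring R] {X Y : Type} [AddCommGroup X] [Module R X]
  [AddCommGroup Y] [Module R Y]

theorem Submodule.FG.countablyGenerated {A : Submodule R X} (hA : A.FG) :
    CountablyGenerated R A :=
  let ⟨T, hT⟩ := hA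
  ⟨T, T.countable_toSet, hT⟩

theorem CountablyGenerated.map {A : Submodule R X} (hA : CountablyGenerated R A)
    (f : X →ₗ[R] Y) : CountablyGenerated R (A.map f) :=
  let ⟨S, hS, hSA⟩ := hA
  ⟨f '' S, hS.image f, by rw [span_image, hSA]⟩

theorem CountablyGenerated.iSup {ι : Type} [Countable ι] {A : ι → Submodule R X}
    (hA : ∀ i, CountablyGenerated R (A i)) : CountablyGenerated R (⨆ i, A i) := by
  choose S hS hSA using hA
  exact ⟨⋃ i, S i, countable_iUnion hS, by simp only [span_iUnion, hSA]⟩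

theorem CountablyGenerated.inf_of_forall_fg {N K : Submodule R X}
    (hN : CountablyGenerated R N) (hK : ∀ A : Submodule R X, A.FG → (A ⊓ K).FG) :
    CountablyGenerated R (N ⊓ K) := by
  obtain ⟨S, hS, rfl⟩ := hN
  have : Countable {T : Set X // T.Finite ∧ T ⊆ S} :=
    (countable_ofPred_finite_subset hS).to_subtype
  have hiSup : span R S ⊓ K = ⨆ T : {T : Set X // T.Finite ∧ T ⊆ S}, span R T.1 ⊓ K := by
    refine le_antisymm (fun x ⟨hxS, hxK⟩ ↦ ?_)
      (iSup_le fun T ↦ inf_le_inf_right K (span_mono T.2.2))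
    obtain ⟨T, hTS, hxT⟩ := mem_span_finite_of_mem_span hxS
    exact mem_iSup_of_mem (⟨T, T.finite_toSet, hTS⟩ : {T : Set X // T.Finite ∧ T ⊆ S})
      ⟨hxT, hxK⟩
  rw [hiSup]
  exact .iSup fun T ↦ (hK _ (fg_span T.2.1)).countablyGenerated

theorem Submodule.FG.inf_ker {A : Submodule R X} (hA : A.FG) (f : X →ₗ[R] Y)
    [Module.Projective R (A.map f)] : (A ⊓ ker f).FG := by
  have : Module.Finite R A := Module.Finite.iff_fg.mpr hA
  have : Module.Finite R (A.map f) := Module.Finite.iff_fg.mpr (hA.map f)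
  have := Module.finitePresentation_of_projective R (A.map f)
  have hker := Module.FinitePresentation.fg_ker (f.submoduleMap A) (f.submoduleMap_surjective A)
  rw [submoduleMap, ker_restrict] at hker
  rw [← map_comap_subtype]
  exact hker.map A.subtype

theorem Submodule.exists_projective_complement_inf_ker (N : Submodule R X) (f : X →ₗ[R] Y)
    [Module.Projective R (N.map f)] :
    ∃ D : Submodule R X, Disjoint (N ⊓ ker f) D ∧ N ⊓ ker f ⊔ D = N ∧
      Module.Projective R D := by
  obtain ⟨σ, hσ⟩ := (f.submoduleMap N).exists_rightInverse_of_surjective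
    (range_eq_top.mpr (f.submoduleMap_surjective N))
  set τ := N.subtype ∘ₗ σ
  have hfτ : ∀ y, f (τ y) = y := fun y ↦ congr_arg Subtype.val (LinearMap.congr_fun hσ y)
  have hτ : Injective τ := fun y z h ↦ Subtype.ext (by rw [← hfτ y, ← hfτ z, h])
  refine ⟨range τ, ?_, le_antisymm (sup_le inf_le_left ?_) fun x hx ↦ ?_,
    .of_equiv (LinearEquiv.ofInjective τ hτ)⟩
  · rw [disjoint_def]
    rintro _ ⟨-, hx⟩ ⟨y, rfl⟩
    rw [SetLike.mem_coe, mem_ker, hfτ] at hx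
    simp [show y = 0 from Subtype.ext hx]
  · rintro _ ⟨y, rfl⟩
    exact (σ y).2
  · have hxτ : x - τ ⟨f x, mem_map_of_mem hx⟩ ∈ N ⊓ ker f :=
      ⟨sub_mem hx (σ _).2, by simp [hfτ]⟩
    simpa using add_mem_sup hxτ (mem_range_self τ ⟨f x, mem_map_of_mem hx⟩)

theorem iSupIndep_of_disjoint_iSup_lt {α ι : Type*} [CompleteLattice α] [IsModularLattice α]
    [IsCompactlyGenerated α] [LinearOrder ι] {f : ι → α}
    (h : ∀ i, Disjoint (f i) (⨆ j < i, f j)) : iSupIndep f := by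
  classical
  refine iSupIndep_iff_supIndep.mpr fun s ↦ ?_
  induction s using Finset.induction_on_max with
  | empty => exact Finset.supIndep_empty f
  | insert a s ha ih =>
    exact ih.insert ((h a).mono_right (Finset.sup_le fun j hj ↦ le_biSup f (ha j hj)))

theorem Submodule.projective_iSup {ι : Type*} {D : ι → Submodule R X} (hD : iSupIndep D)
    [∀ i, Module.Projective R (D i)] : Module.Projective R ↥(⨆ i, D i) := by
  classical
  exact .of_equiv ((LinearEquiv.ofInjective _ hD.dfinsupp_lsum_injective).trans
    (LinearEquiv.ofEq _ _ (iSup_eq_range_dfinsupp_lsum D).symm))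

theorem Submodule.projective_iSup_of_disjoint_sup_eq {C : ℕ → Submodule R X} (hC : C 0 = ⊥)
    (hstep : ∀ k, ∃ D : Submodule R X, Disjoint (C k) D ∧ C k ⊔ D = C (k + 1) ∧
      Module.Projective R D) :
    Module.Projective R ↥(⨆ k, C k) := by
  choose D hdisj hsup hD using hstep
  have hCD : ∀ k, C k = ⨆ j < k, D j := by
    intro k
    induction k with
    | zero => simp [hC]
    | succ k ih => rw [Nat.iSup_lt_succ, ← ih, hsup]
  have hCD' : ⨆ k, C k = ⨆ k, D k :=
    le_antisymm (iSup_le fun k ↦ (hCD k).trans_le (iSup₂_le fun j _ ↦ le_iSup D j))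
      (iSup_le fun k ↦ (hsup k ▸ le_sup_right).trans (le_iSup C (k + 1)))
  rw [hCD']
  exact projective_iSup (iSupIndep_of_disjoint_iSup_lt fun k ↦ hCD k ▸ (hdisj k).symm)

end General

section NatFinsupp

variable {R : Type} [Ring R]

theorem supported_Iio_succ_inf_ker_lapply (k : ℕ) :
    supported R R (Iio (k + 1)) ⊓ ker (lapply k) = supported R R (Iio k) := by
  ext x
  simp only [mem_inf, mem_supported', mem_Iio, mem_ker, lapply_apply, not_lt]
  exact ⟨fun ⟨h, hk⟩ i hi ↦ (hi.eq_or_lt).elim (· ▸ hk) (h i),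
    fun h ↦ ⟨fun i hi ↦ h i (by omega), h k le_rfl⟩⟩

theorem monotone_supported_Iio : Monotone fun k : ℕ ↦ supported R R (Iio k) :=
  fun _ _ h ↦ supported_mono (Iio_subset_Iio h)

theorem iSup_supported_Iio : ⨆ k : ℕ, supported R R (Iio k) = ⊤ := by
  rw [← supported_iUnion, iUnion_Iio, supported_univ]

theorem Submodule.FG.exists_le_supported_Iio {A : Submodule R (ℕ →₀ R)} (hA : A.FG) :
    ∃ n, A ≤ supported R R (Iio n) := by
  have hA' := (fg_iff_compact A).mp hA
  rw [CompleteLattice.isCompactElement_iff_le_of_directed_sSup_le] at hA'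
  obtain ⟨_, ⟨n, rfl⟩, hn⟩ := hA' _ (range_nonempty _)
    monotone_supported_Iio.directed_le.directedOn_range (by simp [sSup_range, iSup_supported_Iio])
  exact ⟨n, hn⟩

namespace IsLeftCountablyHereditary

variable (hR : IsLeftCountablyHereditary R)
include hR

theorem fg_inf_supported_Iio {A : Submodule R (ℕ →₀ R)} (hA : A.FG) (k : ℕ) :
    (A ⊓ supported R R (Iio k)).FG := by
  obtain ⟨n, hn⟩ := hA.exists_le_supported_Iio
  rcases le_total n k with hnk | hkn
  · rwa [inf_eq_left.mpr (hn.trans (monotone_supported_Iio hnk))]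
  induction hkn using Nat.decreasingInduction with
  | self => rwa [inf_eq_left.mpr hn]
  | of_succ k _ ih =>
    have : Module.Projective R ((A ⊓ supported R R (Iio (k + 1))).map (lapply k)) :=
      hR _ (ih.map _).countablyGenerated
    simpa only [inf_assoc, supported_Iio_succ_inf_ker_lapply] using ih.inf_ker (lapply k)

theorem projective_of_countablyGenerated_nat {N : Submodule R (ℕ →₀ R)}
    (hN : CountablyGenerated R N) : Module.Projective R N := by
  set C : ℕ → Submodule R (ℕ →₀ R) := fun k ↦ N ⊓ supported R R (Iio k)
  have hCN : ⨆ k, C k = N := by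
    rw [← monotone_supported_Iio.directed_le.inf_iSup_eq, iSup_supported_Iio, inf_top_eq]
  rw [← hCN]
  refine projective_iSup_of_disjoint_sup_eq (by simp [C]) fun k ↦ ?_
  have : Module.Projective R ((C (k + 1)).map (lapply k)) :=
    hR _ ((hN.inf_of_forall_fg fun A hA ↦ hR.fg_inf_supported_Iio hA (k + 1)).map _)
  simpa only [C, inf_assoc, supported_Iio_succ_inf_ker_lapply] using
    (C (k + 1)).exists_projective_complement_inf_ker (lapply k)

theorem projective_of_countablyGenerated {ι : Type} {N : Submodule R (ι →₀ R)}
    (hN : CountablyGenerated R N) : Module.Projective R N := by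
  obtain ⟨S, hS, hSN⟩ := hN
  have hNY : N ≤ supported R R (⋃ x ∈ S, ↑x.support) :=
    hSN ▸ span_le.mpr fun x hx ↦
      (mem_supported R x).mpr (subset_biUnion_of_mem (u := fun x ↦ (x.support : Set ι)) hx)
  obtain ⟨e, he⟩ := countable_iff_exists_injOn.mp
    (hS.biUnion fun x _ ↦ x.support.countable_toSet)
  set φ := lmapDomain R R e ∘ₗ N.subtype
  have hφ : Injective φ := fun x y h ↦ Subtype.ext (mapDomain_injOn _ he (hNY x.2) (hNY y.2) h)
  have : Module.Projective R (LinearMap.range φ) := hR.projective_of_countablyGenerated_nat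
    (by rw [LinearMap.range_comp, range_subtype]; exact CountablyGenerated.map ⟨S, hS, hSN⟩ _)
  exact .of_equiv (LinearEquiv.ofInjective φ hφ).symm

end IsLeftCountablyHereditary

end NatFinsupp

/-- If every countably generated left ideal of `R` is projective (`R` is left countably
hereditary), then every projective left `R`-module is `ℵ₁`-projective: all its countably
generated submodules are projective. -/
theorem aleph1Projective_of_projective_of_countablyHereditary (R : Type) [Ring R]
    (hR : ∀ I : Ideal R, CountablyGenerated R I → Module.Projective R ↥I) :
    ∀ (P : Type) (_ : AddCommGroup P) (_ : Module R P), Module.Projective R P →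
      ∀ A : Submodule R P, CountablyGenerated R A → Module.Projective R ↥A := by
  intro P _ _ hP A hA
  obtain ⟨s, hs⟩ := Module.projective_def'.mp hP
  have := IsLeftCountablyHereditary.projective_of_countablyGenerated hR (hA.map s)
  exact .of_equiv (A.equivMapOfInjective s (injective_of_comp_eq_id s _ hs)).symm
end

section
/- A left countably hereditary ring with finite left uniform (Goldie) dimension is left noetherian. -/
/-!
By finite uniform dimension, every countably generated left ideal `Q` has a finitely generated
essential submodule `E`. As `Q` is projective it has a dual basis, and only finitely many of its
coordinate functions `Q → R` are nonzero on the generators of `E`. Every other one vanishes on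
`E`; its image is a countably generated, hence projective, left ideal, so a copy of that image
splits off inside `Q` meeting the kernel, and thus `E`, trivially. Essentiality forces the image
to be zero, so `Q` is spanned by finitely many elements. A module whose countably generated
submodules are finitely generated is noetherian.
-/

open Submodule CompleteLattice

def HasFiniteUniformDimension (α : Type*) [CompleteLattice α] : Prop :=
  ¬ ∃ f : ℕ → α, (∀ n, f n ≠ ⊥) ∧ iSupIndep f

def IsEssential {α : Type*} [CompleteLattice α] (a : α) : Prop :=
  ∀ b, Disjoint a b → b = ⊥

section Lattice

variable {α : Type*} [CompleteLattice α]

lemma isCompactElement_sup {a b : α} (ha : IsCompactElement a) (hb : IsCompactElement b) :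
    IsCompactElement (a ⊔ b) := by
  classical
  simpa using isCompactElement_finsetSup (f := id) {a, b} (by simp [ha, hb])

variable [IsCompactlyGenerated α]

lemma exists_isCompactElement_ne_bot_le {b : α} (hb : b ≠ ⊥) :
    ∃ x, IsCompactElement x ∧ x ≠ ⊥ ∧ x ≤ b := by
  contrapose! hb
  rw [← sSup_compact_le_eq b, sSup_eq_bot]
  exact fun x ⟨hx, hxb⟩ => by_contra fun hx0 => hb x hx hx0 hxb

variable [IsModularLattice α]

lemma iSupIndep_of_disjoint_sup_range {f : ℕ → α}
    (h : ∀ n, Disjoint (f n) ((Finset.range n).sup f)) : iSupIndep f := by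
  have hrange : ∀ n, (Finset.range n).SupIndep f := by
    intro n
    induction n with
    | zero => simp
    | succ n ih => rw [Finset.range_add_one]; exact ih.insert (h n)
  rw [iSupIndep_iff_supIndep]
  intro s
  exact (hrange (s.sup id + 1)).subset fun i hi =>
    Finset.mem_range.2 (Nat.lt_succ_of_le (Finset.le_sup (f := id) hi))

/-- Otherwise one keeps adjoining to a compact `c` a nonzero compact element disjoint from it,
producing an infinite independent sequence. -/
lemma HasFiniteUniformDimension.exists_isCompactElement_isEssential
    (hdim : HasFiniteUniformDimension α) : ∃ c : α, IsCompactElement c ∧ IsEssential c := by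
  by_contra! hess
  have hnext : ∀ c : α, ∃ x : α, IsCompactElement c →
      IsCompactElement x ∧ x ≠ ⊥ ∧ Disjoint c x := by
    intro c
    by_cases hc : IsCompactElement c
    · obtain ⟨b, hcb, hb⟩ : ∃ b, Disjoint c b ∧ b ≠ ⊥ := by
        simpa [IsEssential] using hess c hc
      obtain ⟨x, hx, hx0, hxb⟩ := exists_isCompactElement_ne_bot_le hb
      exact ⟨x, fun _ => ⟨hx, hx0, hcb.mono_right hxb⟩⟩
    · exact ⟨⊥, fun h => absurd h hc⟩
  choose next hnext using hnext
  let c : ℕ → α := fun n => Nat.rec ⊥ (fun _ c => c ⊔ next c) n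
  have hc : ∀ n, IsCompactElement (c n) := by
    intro n
    induction n with
    | zero => simpa [c] using isCompactElement_finsetSup (f := id) (∅ : Finset α) (by simp)
    | succ n ih => exact isCompactElement_sup ih (hnext _ ih).1
  have hsup : ∀ n, (Finset.range n).sup (fun i => next (c i)) ≤ c n := by
    intro n
    induction n with
    | zero => simp
    | succ n ih =>
      rw [Finset.range_add_one, Finset.sup_insert, sup_comm]
      exact sup_le_sup ih le_rfl
  exact hdim ⟨fun n => next (c n), fun n => (hnext _ (hc n)).2.1,
    iSupIndep_of_disjoint_sup_range fun n => (hnext _ (hc n)).2.2.symm.mono_right (hsup n)⟩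

end Lattice

section Module

variable {R M : Type*} [Semiring R] [AddCommMonoid M] [Module R M]

lemma HasFiniteUniformDimension.submodule (hdim : HasFiniteUniformDimension (Submodule R M))
    (Q : Submodule R M) : HasFiniteUniformDimension (Submodule R Q) := by
  rintro ⟨f, hf0, hf⟩
  refine hdim ⟨fun n => (f n).map Q.subtype, fun n => ?_,
    Q.subtype.iSupIndep_map Q.injective_subtype hf⟩
  rw [Ne, ← map_bot Q.subtype, (map_injective_of_injective Q.injective_subtype).eq_iff]
  exact hf0 n

lemma LinearMap.eq_zero_of_isEssential_le_ker {N : Type*} [AddCommMonoid N] [Module R N]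
    (f : M →ₗ[R] N) [Module.Projective R (LinearMap.range f)] {E : Submodule R M}
    (hE : IsEssential E) (hEf : E ≤ LinearMap.ker f) : f = 0 := by
  obtain ⟨g, hg⟩ := Module.projective_lifting_property f.rangeRestrict LinearMap.id
    f.surjective_rangeRestrict
  have hgf (y) : f.rangeRestrict (g y) = y := LinearMap.congr_fun hg y
  have hdisj : Disjoint E (LinearMap.range g) := by
    rw [disjoint_def]
    rintro _ hyE ⟨y, rfl⟩
    have hy : y = 0 := by rw [← hgf y]; ext; exact hEf hyE
    simp [hy]
  have hg0 : g = 0 := LinearMap.range_eq_bot.1 (hE _ hdisj)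
  ext x
  simpa [hg0] using congrArg Subtype.val (hgf (f.rangeRestrict x)).symm

lemma Module.Finite.of_projective_of_isEssential_fg [Module.Projective R M]
    (hrange : ∀ f : M →ₗ[R] R, Module.Projective R (LinearMap.range f))
    {E : Submodule R M} (hE : IsEssential E) (hEfg : E.FG) : Module.Finite R M := by
  classical
  obtain ⟨s, hs⟩ := Module.projective_def'.1 ‹Module.Projective R M›
  obtain ⟨T, rfl⟩ := hEfg
  let S := T.biUnion fun t => (s t).support
  have hcoord (z) (hz : z ∉ S) : Finsupp.lapply z ∘ₗ s = 0 := by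
    have := hrange (Finsupp.lapply z ∘ₗ s)
    refine LinearMap.eq_zero_of_isEssential_le_ker _ hE (span_le.2 fun t ht => ?_)
    have hzt : z ∉ (s t).support := fun h => hz (Finset.mem_biUnion.2 ⟨t, ht, h⟩)
    simpa using hzt
  refine ⟨⟨S, eq_top_iff.2 fun p _ => ?_⟩⟩
  have hsupp : s p ∈ Finsupp.supported R R (S : Set M) := fun z hz =>
    by_contra fun hzS => Finsupp.mem_support_iff.1 hz (LinearMap.congr_fun (hcoord z hzS) p)
  rw [← LinearMap.id_apply (R := R) p, ← hs, LinearMap.comp_apply]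
  have := mem_map_of_mem (f := Finsupp.linearCombination R id) hsupp
  rwa [← Finsupp.span_image_eq_map_linearCombination, Set.image_id] at this

end Module

section CountablyGenerated

variable {R M : Type} [Ring R] [AddCommGroup M] [Module R M]

lemma CountablyGenerated.range {N : Type} [AddCommGroup N] [Module R N] {A : Submodule R M}
    (hA : CountablyGenerated R A) (f : A →ₗ[R] N) :
    CountablyGenerated R (LinearMap.range f) := by
  obtain ⟨S, hS, rfl⟩ := hA
  refine ⟨f '' ((↑) ⁻¹' S), (hS.preimage Subtype.val_injective).image f, ?_⟩
  rw [← Submodule.map_span, span_span_coe_preimage, Submodule.map_top]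

lemma isNoetherian_of_forall_countablyGenerated_fg
    (h : ∀ A : Submodule R M, CountablyGenerated R A → A.FG) : IsNoetherian R M := by
  rw [isNoetherian_iff', WellFoundedGT, isWellFounded_iff,
    wellFounded_iff_isEmpty_descending_chain]
  refine ⟨fun ⟨f, hf⟩ => ?_⟩
  choose x hx using fun n => SetLike.exists_of_lt (hf n)
  have hmono : Monotone f := monotone_nat_of_le_succ fun n => (hf n).le
  have hfg := h (span R (Set.range x)) ⟨Set.range x, Set.countable_range x, rfl⟩
  obtain ⟨s, hs⟩ :=
    ((fg_iff_compact _).1 hfg).exists_finset_of_le_iSup _ _ span_range_eq_iSup.le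
  have hle : span R (Set.range x) ≤ f (s.sup id + 1) :=
    hs.trans <| iSup₂_le fun i hi => (span_singleton_le_iff_mem _ _).2 <|
      hmono (Nat.succ_le_succ (Finset.le_sup (f := id) hi)) (hx i).1
  exact (hx _).2 (hle (subset_span ⟨_, rfl⟩))

end CountablyGenerated

/-- A left countably hereditary ring with finite left uniform (Goldie) dimension is left
noetherian. -/
theorem noetherian_of_countablyHereditary_of_finite_uniform_dimension (R : Type) [Ring R]
    (hR : ∀ I : Ideal R, CountablyGenerated R I → Module.Projective R ↥I)
    (hdim : ¬ ∃ f : ℕ → Submodule R R, (∀ n, f n ≠ ⊥) ∧ iSupIndep f) :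
    IsNoetherianRing R := by
  refine isNoetherian_of_forall_countablyGenerated_fg fun Q hQ => ?_
  have := hR Q hQ
  obtain ⟨E, hEc, hE⟩ :=
    (HasFiniteUniformDimension.submodule hdim Q).exists_isCompactElement_isEssential
  rw [← Module.Finite.iff_fg]
  exact .of_projective_of_isEssential_fg (fun f => hR _ (hQ.range f)) hE
    ((fg_iff_compact E).2 hEc)
end

section
/- A left countably hereditary left Bézout domain is a left principal ideal domain. -/
theorem isNoetherian_of_forall_iSup_fg {R M : Type*} [Semiring R] [AddCommMonoid M] [Module R M]
    (h : ∀ N : ℕ → Submodule R M, Monotone N → (∀ n, (N n).FG) → (⨆ n, N n).FG) :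
    IsNoetherian R M := by
  rw [isNoetherian_iff_fg_wellFounded, wellFoundedGT_iff_monotone_chain_condition]
  intro f
  have hmono : Monotone fun n => (f n).1 := fun m n hmn => f.monotone hmn
  obtain ⟨-, ⟨k, rfl⟩, hk⟩ := (Submodule.fg_iff_compact _).mp (h _ hmono fun n => (f n).2)
    _ _ (Set.range_nonempty _) hmono.directed_le.directedOn_range isLUB_iSup le_rfl
  exact ⟨k, fun m hkm => Subtype.ext <|
    le_antisymm (hmono hkm) ((le_iSup (fun n => (f n).1) m).trans hk)⟩

theorem countablyGenerated_iSup_of_fg {R M : Type} [Ring R] [AddCommGroup M] [Module R M]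
    {N : ℕ → Submodule R M} (hN : ∀ n, (N n).FG) : CountablyGenerated R (⨆ n, N n) := by
  choose s hs using hN
  exact ⟨⋃ n, s n, Set.countable_iUnion fun n => (s n).countable_toSet,
    by simp_rw [Submodule.span_iUnion, hs]⟩

theorem Ideal.exists_fg_le_forall_mem_of_mem_span_singleton {R : Type*} [Ring R] [NoZeroDivisors R]
    (J : Ideal R) [Module.Projective R J] {x : R} (hxJ : x ∈ J) (hx : x ≠ 0) :
    ∃ K : Ideal R, K.FG ∧ K ≤ J ∧ ∀ y ∈ J, x ∈ Ideal.span {y} → y ∈ K := by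
  obtain ⟨s, hs⟩ := Module.Projective.out (R := R) (P := J)
  set F := (s ⟨x, hxJ⟩).support
  refine ⟨Submodule.span R (Subtype.val '' (F : Set J)),
    Submodule.fg_span (F.finite_toSet.image _), ?_, ?_⟩
  · rw [Submodule.span_le]
    rintro _ ⟨j, -, rfl⟩
    exact j.2
  rintro y hyJ hxy
  obtain ⟨q, rfl⟩ := Ideal.mem_span_singleton'.mp hxy
  have hq : q ≠ 0 := by rintro rfl; exact hx (zero_mul y)
  have hsupp : (s ⟨y, hyJ⟩).support ⊆ F := by
    intro j hj
    have hsmul : (⟨q * y, hxJ⟩ : J) = q • ⟨y, hyJ⟩ := rfl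
    simp only [F, hsmul, map_smul, Finsupp.mem_support_iff, Finsupp.smul_apply, smul_eq_mul] at hj ⊢
    exact mul_ne_zero hq hj
  refine (Finsupp.mem_span_image_iff_linearCombination R).mpr
    ⟨s ⟨y, hyJ⟩, (Finsupp.mem_supported R _).mpr ?_, ?_⟩
  · exact_mod_cast hsupp
  · have := congrArg J.subtype (hs ⟨y, hyJ⟩)
    rwa [Finsupp.apply_linearCombination] at this

theorem Ideal.fg_iSup_of_monotone_isPrincipal {R : Type*} [Ring R] [NoZeroDivisors R]
    {N : ℕ → Ideal R} (hN : Monotone N) (hprin : ∀ n, (N n).IsPrincipal)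
    [Module.Projective R ↥(⨆ n, N n)] : (⨆ n, N n).FG := by
  rcases eq_or_ne (⨆ n, N n) ⊥ with hbot | hbot
  · exact hbot ▸ Submodule.fg_bot
  obtain ⟨x, hxJ, hx⟩ := Submodule.exists_mem_ne_zero_of_ne_bot hbot
  obtain ⟨m₀, hxm₀⟩ := (Submodule.mem_iSup_of_directed N hN.directed_le).mp hxJ
  obtain ⟨K, hKfg, hKJ, hK⟩ := (⨆ n, N n).exists_fg_le_forall_mem_of_mem_span_singleton hxJ hx
  suffices ⨆ n, N n ≤ K from (hKJ.antisymm this) ▸ hKfg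
  refine iSup_le fun n => (hN (le_max_left n m₀)).trans ?_
  -- every `N m` with `m ≥ m₀` is generated by a right divisor of `x`
  set m := max n m₀
  have hgen := (hprin m).span_singleton_generator
  rw [← hgen, Ideal.span_singleton_le_iff_mem]
  refine hK _ (le_iSup N m (Submodule.IsPrincipal.generator_mem _)) ?_
  rw [Ideal.span, hgen]
  exact hN (le_max_right n m₀) hxm₀

/-- A left countably hereditary left Bézout domain is a left principal ideal domain. -/
theorem leftPID_of_countablyHereditary_bezout_domain (R : Type) [Ring R] [IsDomain R]
    (hch : ∀ I : Ideal R, CountablyGenerated R I → Module.Projective R ↥I)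
    (hbez : ∀ I : Ideal R, I.FG → ∃ a : R, I = Submodule.span R {a}) :
    ∀ I : Ideal R, ∃ a : R, I = Submodule.span R {a} := by
  have : IsNoetherian R R := isNoetherian_of_forall_iSup_fg fun N hN hfg =>
    have := hch _ (countablyGenerated_iSup_of_fg hfg)
    Ideal.fg_iSup_of_monotone_isPrincipal hN fun n => ⟨hbez (N n) (hfg n)⟩
  exact fun I => hbez I (IsNoetherian.noetherian I)
end

section
/- A von Neumann regular ring is left countably hereditary: every countably generated left ideal is projective. -/
theorem Module.Projective.of_dualBasis {R M ι : Type*} [Semiring R] [AddCommMonoid M]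
    [Module R M] (m : ι → M) (φ : ι → M →ₗ[R] R)
    (hfin : ∀ x, Function.HasFiniteSupport fun i ↦ φ i x)
    (hsum : ∀ x, ∑ᶠ i, φ i x • m i = x) : Module.Projective R M := by
  let coord : M →ₗ[R] ι →₀ R :=
    { toFun x := Finsupp.ofSupportFinite (fun i ↦ φ i x) (hfin x)
      map_add' x y := by ext i; exact map_add (φ i) x y
      map_smul' r x := by ext i; exact map_smul (φ i) r x }
  refine .of_split coord (Finsupp.linearCombination R m) (LinearMap.ext fun x ↦ ?_)
  have hsupp : (Function.support fun i ↦ φ i x • m i) ⊆ (coord x).support := fun i hi ↦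
    Finsupp.mem_support_iff.mpr (left_ne_zero_of_smul hi)
  conv_rhs => rw [← hsum x, finsum_eq_sum_of_support_subset _ hsupp]
  rfl

theorem Ideal.projective_of_finsum_mul_eq_self {R ι : Type*} [Ring R] {I : Ideal R}
    (f : ι → R) (hf : ∀ i, IsIdempotentElem (f i)) (hfI : ∀ i, f i ∈ I)
    (hfin : ∀ x ∈ I, Function.HasFiniteSupport fun i ↦ x * f i)
    (hsum : ∀ x ∈ I, ∑ᶠ i, x * f i = x) : Module.Projective R I := by
  refine Module.Projective.of_dualBasis (fun i ↦ ⟨f i, hfI i⟩)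
    (fun i ↦ LinearMap.toSpanSingleton R R (f i) ∘ₗ I.subtype) (fun x ↦ hfin x x.2)
    fun x ↦ Subtype.ext ?_
  have hfin' : Function.HasFiniteSupport fun i ↦ ((x : R) * f i) • (⟨f i, hfI i⟩ : I) :=
    (hfin x x.2).subset fun i hi ↦ left_ne_zero_of_smul hi
  change I.subtype (∑ᶠ i, ((x : R) * f i) • (⟨f i, hfI i⟩ : I)) = x
  rw [map_finsum _ hfin']
  simpa only [Submodule.subtype_apply, Submodule.coe_smul, smul_eq_mul, (hf _).mul_mul_self]
    using hsum x x.2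

theorem mul_eq_self_of_le {R : Type*} [Monoid R] {e : ℕ → R} (he : ∀ n, e n * e (n + 1) = e n)
    {x : R} {m n : ℕ} (hx : x * e m = x) (hmn : m ≤ n) : x * e n = x := by
  induction n, hmn using Nat.le_induction with
  | base => exact hx
  | succ n _ ih => rw [← ih, mul_assoc, he]

structure Ideal.IdempotentExhaustion {R : Type*} [Ring R] (I : Ideal R) where
  e : ℕ → R
  e_zero : e 0 = 0
  isIdempotentElem : ∀ n, IsIdempotentElem (e n)
  mul_succ : ∀ n, e n * e (n + 1) = e n
  succ_mul : ∀ n, e (n + 1) * e n = e n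
  mem : ∀ n, e n ∈ I
  exists_mul_eq_self : ∀ x ∈ I, ∃ n, x * e n = x

namespace Ideal.IdempotentExhaustion

variable {R : Type*} [Ring R] {I : Ideal R} (E : I.IdempotentExhaustion) {x : R} {m : ℕ}

theorem support_mul_sub_subset (hx : x * E.e m = x) :
    (Function.support fun k ↦ x * (E.e (k + 1) - E.e k)) ⊆ Finset.range m := by
  intro k hk
  rw [Finset.coe_range, Set.mem_Iio]
  by_contra! hmk
  exact hk <| show x * (E.e (k + 1) - E.e k) = 0 by
    rw [mul_sub, mul_eq_self_of_le E.mul_succ hx hmk,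
      mul_eq_self_of_le E.mul_succ hx (hmk.trans k.le_succ), sub_self]

theorem finsum_mul_sub_eq_self (hx : x * E.e m = x) :
    ∑ᶠ k, x * (E.e (k + 1) - E.e k) = x := by
  rw [finsum_eq_sum_of_support_subset _ (E.support_mul_sub_subset hx), ← Finset.mul_sum,
    Finset.sum_range_sub, E.e_zero, sub_zero, hx]

end Ideal.IdempotentExhaustion

theorem Ideal.IdempotentExhaustion.projective {R : Type*} [Ring R] {I : Ideal R}
    (E : I.IdempotentExhaustion) : Module.Projective R I := by
  refine Ideal.projective_of_finsum_mul_eq_self (fun k ↦ E.e (k + 1) - E.e k)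
    (fun k ↦ (E.isIdempotentElem k).sub (E.isIdempotentElem (k + 1)) (E.mul_succ k) (E.succ_mul k))
    (fun k ↦ sub_mem (E.mem (k + 1)) (E.mem k)) (fun x hx ↦ ?_) (fun x hx ↦ ?_)
  all_goals obtain ⟨m, hm⟩ := E.exists_mul_eq_self x hx
  · exact (Finset.range m).finite_toSet.subset (E.support_mul_sub_subset hm)
  · exact E.finsum_mul_sub_eq_self hm

theorem add_sub_mul_mul_self_of_mul_eq_zero {R : Type*} [Ring R] {e f : R}
    (he : IsIdempotentElem e) (hfe : f * e = 0) : (e + f - e * f) * e = e := by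
  rw [sub_mul, add_mul, he.eq, hfe, mul_assoc, hfe, mul_zero, add_zero, sub_zero]

theorem IsIdempotentElem.add_sub_mul_of_mul_eq_zero {R : Type*} [Ring R] {e f : R}
    (he : IsIdempotentElem e) (hf : IsIdempotentElem f) (hfe : f * e = 0) :
    IsIdempotentElem (e + f - e * f) := by
  have hgf : (e + f - e * f) * f = f := by
    rw [sub_mul, add_mul, hf.eq, mul_assoc, hf.eq, add_sub_cancel_left]
  rw [IsIdempotentElem, mul_sub, mul_add, ← mul_assoc, add_sub_mul_mul_self_of_mul_eq_zero he hfe,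
    hgf]

theorem Ideal.exists_isIdempotentElem_extend {R : Type*} [Ring R]
    (hreg : ∀ a : R, ∃ x : R, a * x * a = a) {I : Ideal R} {e b : R}
    (he : IsIdempotentElem e) (heI : e ∈ I) (hb : b ∈ I) :
    ∃ e' ∈ I, IsIdempotentElem e' ∧ e * e' = e ∧ e' * e = e ∧ b * e' = b := by
  set c := b - b * e with hc
  obtain ⟨x, hx⟩ := hreg c
  have hce : c * e = 0 := by rw [hc, sub_mul, mul_assoc, he.eq, sub_self]
  have hf : IsIdempotentElem (x * c) := by
    rw [IsIdempotentElem, mul_assoc, ← mul_assoc c, hx]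
  have hfe : x * c * e = 0 := by rw [mul_assoc, hce, mul_zero]
  have hcf : c * (x * c) = c := by rw [← mul_assoc, hx]
  refine ⟨e + x * c - e * (x * c), ?_, he.add_sub_mul_of_mul_eq_zero hf hfe, ?_, ?_, ?_⟩
  · have hcI : x * c ∈ I := I.mul_mem_left x (sub_mem hb (I.mul_mem_left b heI))
    exact sub_mem (add_mem heI hcI) (I.mul_mem_left e hcI)
  · rw [mul_sub, mul_add, he.eq, he.mul_self_mul, add_sub_cancel_right]
  · exact add_sub_mul_mul_self_of_mul_eq_zero he hfe
  · calc b * (e + x * c - e * (x * c)) = b * e + c * (x * c) := by rw [hc]; noncomm_ring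
      _ = b := by rw [hcf, hc, add_sub_cancel]

theorem Ideal.exists_mul_eq_self_of_mem_span {R : Type*} [Ring R] {e : ℕ → R}
    (he : ∀ n, e n * e (n + 1) = e n) {s : Set R} (hs : ∀ y ∈ s, ∃ n, y * e n = y) :
    ∀ x ∈ Ideal.span s, ∃ n, x * e n = x := by
  intro x hx
  induction hx using Submodule.span_induction with
  | mem y hy => exact hs y hy
  | zero => exact ⟨0, zero_mul _⟩
  | add y z _ _ hy hz =>
    obtain ⟨m, hm⟩ := hy
    obtain ⟨n, hn⟩ := hz
    exact ⟨max m n, by rw [add_mul, mul_eq_self_of_le he hm (le_max_left m n),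
      mul_eq_self_of_le he hn (le_max_right m n)]⟩
  | smul r y _ hy =>
    obtain ⟨n, hn⟩ := hy
    exact ⟨n, by rw [smul_eq_mul, mul_assoc, hn]⟩

theorem Ideal.nonempty_idempotentExhaustion_span {R : Type*} [Ring R]
    (hreg : ∀ a : R, ∃ x : R, a * x * a = a) (a : ℕ → R) :
    Nonempty (Ideal.span (Set.range a)).IdempotentExhaustion := by
  set I := Ideal.span (Set.range a)
  have step (n : ℕ) (e : {e : R // e ∈ I ∧ IsIdempotentElem e}) :
      ∃ e' : {e : R // e ∈ I ∧ IsIdempotentElem e},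
        e.1 * e'.1 = e.1 ∧ e'.1 * e.1 = e.1 ∧ a n * e'.1 = a n := by
    obtain ⟨e', he'I, he', h⟩ :=
      exists_isIdempotentElem_extend hreg e.2.2 e.2.1 (subset_span ⟨n, rfl⟩)
    exact ⟨⟨e', he'I, he'⟩, h⟩
  choose next hnext using step
  let e (n : ℕ) : {e : R // e ∈ I ∧ IsIdempotentElem e} := Nat.rec ⟨0, I.zero_mem, .zero⟩ next n
  have mul_succ (n : ℕ) : (e n).1 * (e (n + 1)).1 = (e n).1 := (hnext n (e n)).1
  exact ⟨{
    e n := (e n).1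
    e_zero := rfl
    isIdempotentElem n := (e n).2.2
    mul_succ
    succ_mul n := (hnext n (e n)).2.1
    mem n := (e n).2.1
    exists_mul_eq_self := exists_mul_eq_self_of_mem_span mul_succ <| by
      rintro _ ⟨k, rfl⟩
      exact ⟨k + 1, (hnext k (e k)).2.2⟩ }⟩

/-- A von Neumann regular ring is left countably hereditary: every countably generated left
ideal is projective. -/
theorem countablyHereditary_of_vonNeumannRegular (R : Type) [Ring R]
    (hreg : ∀ a : R, ∃ x : R, a * x * a = a) :
    ∀ I : Ideal R, CountablyGenerated R I → Module.Projective R ↥I := by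
  rintro I ⟨S, hS, rfl⟩
  obtain ⟨a, ha⟩ := (hS.insert 0).exists_eq_range (Set.insert_nonempty 0 S)
  rw [← Submodule.span_insert_zero, ha]
  exact (Ideal.nonempty_idempotentExhaustion_span hreg a).some.projective
end

section
/- An abelian group is torsion-free and Mittag-Leffler if and only if it is ℵ₁-free (every countably generated subgroup is free). -/
open scoped TensorProduct

/-- The canonical map `(∏ i, Nᵢ) ⊗_ℤ M → ∏ i, (Nᵢ ⊗_ℤ M)`. -/
noncomputable def zCanonical {ι : Type} (N : ι → Type) [∀ i, AddCommGroup (N i)]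
    (M : Type) [AddCommGroup M] :
    ((∀ i, N i) ⊗[ℤ] M) →ₗ[ℤ] ∀ i, (N i ⊗[ℤ] M) :=
  TensorProduct.lift
    (LinearMap.mk₂ ℤ (fun n m i => n i ⊗ₜ[ℤ] m)
      (fun n n' m => by funext i; simp [TensorProduct.add_tmul])
      (fun c n m => by funext i; simp [TensorProduct.smul_tmul'])
      (fun n m m' => by funext i; simp [TensorProduct.tmul_add])
      (fun c n m => by funext i; simp [TensorProduct.tmul_smul]))

/-- The old Mathlib definition (removed since): a monoid is torsion-free if every
non-identity element has infinite order. -/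
def AddMonoid.IsTorsionFree (G : Type*) [AddMonoid G] : Prop :=
  ∀ g : G, g ≠ 0 → ¬IsOfFinAddOrder g

/-!
For torsion-free `M`, the Mittag-Leffler condition forces the pure closure of every finitely
generated subgroup `F` to be finitely generated. Otherwise pick, for every finitely generated `G`,
some `x_G ∉ G` with `k_G x_G ∈ F`. The family `(1 ⊗ k_G x_G)_G` lifts to `(∏ ℤ/k_G) ⊗ F`, and its
image in `(∏ ℤ/k_G) ⊗ M` is killed by the canonical map, so it already vanishes in
`(∏ ℤ/k_G) ⊗ G` for some finitely generated `G ⊇ F`; the `G`-th component then gives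
`k_G x_G ∈ k_G G`, hence `x_G ∈ G`. A countable subgroup is therefore the union of a chain of
finitely generated pure subgroups, and a basis extends along the chain because the successive
quotients are finitely generated and torsion-free, hence free.

Conversely, in an `ℵ₁`-free group every element of `(∏ Nᵢ) ⊗ M` comes from `(∏ Nᵢ) ⊗ G`, where
`G` is the pure closure of a finitely generated subgroup. `G` is countable, hence free, so the
canonical map is injective for `G`; and `(∏ Nᵢ) ⊗ G → (∏ Nᵢ) ⊗ M` is injective since `M ⧸ G` is
torsion-free, hence flat.
-/
open Function LinearMap Module Submodule TensorProduct

section PureClosure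

variable {R M : Type*} [CommRing R] [IsDomain R] [AddCommGroup M] [Module R M]

def pureClosure (F : Submodule R M) : Submodule R M where
  carrier := {x | ∃ r : R, r ≠ 0 ∧ r • x ∈ F}
  add_mem' := by
    rintro x y ⟨r, hr, hrx⟩ ⟨s, hs, hsy⟩
    refine ⟨r * s, mul_ne_zero hr hs, ?_⟩
    rw [smul_add, mul_comm r s, mul_smul, mul_comm s r, mul_smul]
    exact F.add_mem (F.smul_mem s hrx) (F.smul_mem r hsy)
  zero_mem' := ⟨1, one_ne_zero, by simp⟩
  smul_mem' := by
    rintro c x ⟨r, hr, hrx⟩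
    exact ⟨r, hr, by rw [smul_comm]; exact F.smul_mem c hrx⟩

theorem le_pureClosure (F : Submodule R M) : F ≤ pureClosure F :=
  fun x hx => ⟨1, one_ne_zero, by simpa⟩

theorem pureClosure_mono {F G : Submodule R M} (h : F ≤ G) : pureClosure F ≤ pureClosure G :=
  fun _ ⟨r, hr, hrx⟩ => ⟨r, hr, h hrx⟩

theorem pureClosure_bot [IsTorsionFree R M] : pureClosure (⊥ : Submodule R M) = ⊥ :=
  eq_bot_iff.mpr fun _ ⟨_, hr, hrx⟩ => (smul_eq_zero.mp hrx).resolve_left hr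

instance isTorsionFree_quotient_pureClosure (F : Submodule R M) :
    IsTorsionFree R (M ⧸ pureClosure F) := by
  refine .of_smul_eq_zero fun r q hrq => or_iff_not_imp_left.mpr fun hr => ?_
  induction q using Submodule.Quotient.induction_on with | _ x
  rw [← Submodule.Quotient.mk_smul, Submodule.Quotient.mk_eq_zero] at hrq
  rw [Submodule.Quotient.mk_eq_zero]
  obtain ⟨s, hs, hsx⟩ := hrq
  exact ⟨s * r, mul_ne_zero hs hr, by rwa [mul_smul]⟩

theorem countable_pureClosure [Countable R] [IsTorsionFree R M] {F : Submodule R M}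
    (hF : (F : Set M).Countable) : (pureClosure F : Set M).Countable := by
  have := hF.to_subtype
  choose r hr hrx using fun x : pureClosure F => x.2
  have hinj : Injective fun x : pureClosure F => (r x, (⟨r x • x, hrx x⟩ : F)) := by
    intro x y hxy
    simp only [Prod.mk.injEq, Subtype.mk.injEq] at hxy
    obtain ⟨hr_eq, hrxy⟩ := hxy
    rw [hr_eq] at hrxy
    exact Subtype.ext (smul_right_injective M (hr y) hrxy)
  exact Set.countable_coe_iff.mp hinj.countable

end PureClosure

section ProdTensor

variable (R : Type*) [CommRing R] {ι : Type*} (N : ι → Type*) [∀ i, AddCommGroup (N i)]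
  [∀ i, Module R (N i)] (X : Type*) [AddCommGroup X] [Module R X]

noncomputable def prodTensorHom : (∀ i, N i) ⊗[R] X →ₗ[R] ∀ i, N i ⊗[R] X :=
  LinearMap.pi fun i => (LinearMap.proj i).rTensor X

@[simp]
theorem prodTensorHom_tmul (n : ∀ i, N i) (x : X) :
    prodTensorHom R N X (n ⊗ₜ x) = fun i => n i ⊗ₜ x := rfl

variable {R N X}

theorem prodTensorHom_lTensor {Y : Type*} [AddCommGroup Y] [Module R Y] (f : X →ₗ[R] Y)
    (z : (∀ i, N i) ⊗[R] X) (i : ι) :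
    prodTensorHom R N Y (f.lTensor _ z) i = f.lTensor (N i) (prodTensorHom R N X z i) := by
  induction z using TensorProduct.induction_on with
  | zero => simp
  | tmul n x => rfl
  | add z z' hz hz' => simp only [map_add, Pi.add_apply, hz, hz']

theorem equivFinsuppOfBasisRight_prodTensorHom {J : Type*} [DecidableEq J] (b : Basis J R X)
    (z : (∀ i, N i) ⊗[R] X) (i : ι) (j : J) :
    equivFinsuppOfBasisRight b (prodTensorHom R N X z i) j = equivFinsuppOfBasisRight b z j i := by
  induction z using TensorProduct.induction_on with
  | zero => simp
  | tmul n x => simp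
  | add z z' hz hz' => simp only [map_add, Pi.add_apply, Finsupp.add_apply, hz, hz']

variable (R N X)

theorem prodTensorHom_injective [Module.Free R X] : Injective (prodTensorHom R N X) := by
  classical
  set e := equivFinsuppOfBasisRight (N := X) (M := ∀ i, N i) (Free.chooseBasis R X)
  refine (injective_iff_map_eq_zero _).mpr fun z hz => e.injective ?_
  ext j i
  rw [← equivFinsuppOfBasisRight_prodTensorHom, hz]
  simp

theorem prodTensorHom_surjective [Module.Free R X] [Module.Finite R X] :
    Surjective (prodTensorHom R N X) := by
  classical
  set b := Free.chooseBasis R X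
  intro y
  refine ⟨(equivFinsuppOfBasisRight b).symm
    (Finsupp.equivFunOnFinite.symm fun j i => equivFinsuppOfBasisRight b (y i) j), ?_⟩
  ext i
  apply (equivFinsuppOfBasisRight b).injective
  ext j
  rw [equivFinsuppOfBasisRight_prodTensorHom, LinearEquiv.apply_symm_apply]
  rfl

end ProdTensor

theorem coe_zCanonical {ι : Type} (N : ι → Type) [∀ i, AddCommGroup (N i)]
    (M : Type) [AddCommGroup M] : ⇑(zCanonical N M) = prodTensorHom ℤ N M := by
  funext z
  induction z using TensorProduct.induction_on with
  | zero => rw [map_zero, map_zero]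
  | tmul n x => rfl
  | add z z' hz hz' => rw [map_add, map_add, hz, hz']

theorem one_tmul_eq_zero_iff_exists_smul_eq {R X : Type*} [CommRing R] [AddCommGroup X]
    [Module R X] (r : R) (x : X) : (1 : R ⧸ Ideal.span {r}) ⊗ₜ[R] x = 0 ↔ ∃ y, r • y = x := by
  rw [← (quotTensorEquivQuotSMul X (Ideal.span {r})).map_eq_zero_iff]
  simp [Submodule.Quotient.mk_eq_zero, Submodule.ideal_span_singleton_smul,
    Submodule.mem_smul_pointwise_iff_exists]

theorem exists_fg_lTensor_inclusion_eq_zero {R M P : Type*} [CommRing R] [AddCommGroup M]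
    [Module R M] [AddCommGroup P] [Module R P] {F : Submodule R M} (hF : F.FG)
    {x : P ⊗[R] F} (hx : F.subtype.lTensor P x = 0) :
    ∃ (G : Submodule R M) (h : F ≤ G), G.FG ∧ (inclusion h).lTensor P x = 0 := by
  have hx' : F.subtype.rTensor P (TensorProduct.comm R P F x) = 0 := by
    rw [rTensor_comm, hx, map_zero]
  obtain ⟨G, h, hG, hGx⟩ := TensorProduct.eq_zero_of_fg_of_subtype_eq_zero hF hx'
  refine ⟨G, h, hG, ?_⟩
  apply (TensorProduct.comm R P G).injective
  rw [← rTensor_comm, hGx, map_zero]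

theorem Submodule.lTensor_subtype_injective_of_isTorsionFree {R M : Type*} [CommRing R]
    [IsDedekindDomain R] [AddCommGroup M] [Module R M] (G : Submodule R M) [IsTorsionFree R (M ⧸ G)]
    (P : Type*) [AddCommGroup P] [Module R P] : Injective (G.subtype.lTensor P) :=
  lTensor_injective_of_exact_of_flat G.mkQ G.mkQ_surjective G.subtype G.injective_subtype
    (LinearMap.exact_subtype_mkQ G) P

section Chain

variable {R X : Type*} [CommRing R] [IsDomain R] [IsPrincipalIdealRing R] [AddCommGroup X]
  [Module R X]

theorem exists_linearIndepOn_mkQ_sup_span_eq {G Y : Submodule R X} [IsTorsionFree R (X ⧸ G)]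
    (hGY : G ≤ Y) (hY : Y.FG) :
    ∃ u : Set X, LinearIndepOn R G.mkQ u ∧ G ⊔ span R u = Y := by
  set Q := Y.map G.mkQ
  have : Module.Finite R Q := Module.Finite.iff_fg.mpr (hY.map _)
  let c := Free.chooseBasis R Q
  choose v hvY hv using fun j => (Submodule.mem_map.mp (c j).2)
  have hv' : G.mkQ ∘ v = Q.subtype ∘ c := funext hv
  have hind : LinearIndependent R (G.mkQ ∘ v) :=
    hv' ▸ c.linearIndependent.map' Q.subtype Q.ker_subtype
  refine ⟨Set.range v, (linearIndepOn_range_iff hind.injective.of_comp _).mpr hind, ?_⟩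
  have hspan : span R (G.mkQ '' Set.range v) = Q := by
    rw [← Set.range_comp, hv', Set.range_comp,
      Submodule.span_image, c.span_eq, Submodule.map_subtype_top]
  rw [← Submodule.comap_map_mkQ, Submodule.map_span, hspan, Submodule.comap_map_mkQ,
    sup_eq_right.mpr hGY]

theorem Module.free_of_pure_fg_chain {H : ℕ → Submodule R X} (hmono : Monotone H) (h0 : H 0 = ⊥)
    (hfg : ∀ n, (H n).FG) (hpure : ∀ n, IsTorsionFree R (X ⧸ H n)) (htop : ⨆ n, H n = ⊤) :
    Module.Free R X := by
  choose u hu_ind hu_span using fun n =>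
    have := hpure n; exists_linearIndepOn_mkQ_sup_span_eq (hmono n.le_succ) (hfg (n + 1))
  have hV : ∀ n, LinearIndepOn R id (⋃ m < n, u m) ∧ span R (⋃ m < n, u m) = H n := by
    intro n
    induction n with
    | zero => simp [h0]
    | succ n ih =>
      rw [Set.biUnion_lt_succ]
      refine ⟨ih.1.union_id_of_quotient (ih.2 ▸ subset_span) (hu_ind n), ?_⟩
      rw [Submodule.span_union, ih.2, hu_span]
  have hdir : Directed (· ⊆ ·) fun n => ⋃ m < n, u m :=
    (Monotone.directed_le fun _ _ hnk => Set.biUnion_mono (fun _ hm => lt_of_lt_of_le hm hnk)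
      fun _ _ => le_rfl)
  have hT := linearIndepOn_iUnion_of_directed hdir fun n => (hV n).1
  refine .of_basis (Basis.mk hT ?_)
  rw [Set.range_comp' _root_.id, Subtype.range_coe, Set.image_id, Submodule.span_iUnion, ← htop]
  exact (iSup_mono fun n => (hV n).2.ge)

end Chain

def IsMittagLeffler (M : Type) [AddCommGroup M] : Prop :=
  ∀ (ι : Type) (N : ι → Type) (_ : ∀ i, AddCommGroup (N i)), Injective (zCanonical N M)

def IsAleph1Free (M : Type) [AddCommGroup M] : Prop :=
  ∀ A : Submodule ℤ M, (∃ S : Set M, S.Countable ∧ span ℤ S = A) → Module.Free ℤ A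

section MittagLeffler

variable {M : Type} [AddCommGroup M]

theorem IsMittagLeffler.pureClosure_fg [IsTorsionFree ℤ M] (hM : IsMittagLeffler M)
    {F : Submodule ℤ M} (hF : F.FG) : (pureClosure F).FG := by
  by_contra hnfg
  have hout : ∀ G : {G : Submodule ℤ M // G.FG}, ∃ x ∈ pureClosure F, x ∉ G.1 := by
    intro G
    by_contra! hle
    exact hnfg (G.2.of_le hle)
  choose x hx hxG using hout
  choose k hk hkx using hx
  let N (G : {G : Submodule ℤ M // G.FG}) := ℤ ⧸ Ideal.span {k G}
  have : Module.Finite ℤ F := Module.Finite.iff_fg.mpr hF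
  obtain ⟨s, hs⟩ := prodTensorHom_surjective ℤ N F fun G => (1 : N G) ⊗ₜ ⟨k G • x G, hkx G⟩
  have hs0 : F.subtype.lTensor _ s = 0 := by
    refine hM _ N _ ?_
    rw [map_zero, coe_zCanonical]
    funext G
    rw [prodTensorHom_lTensor, hs, lTensor_tmul, Pi.zero_apply,
      one_tmul_eq_zero_iff_exists_smul_eq]
    exact ⟨x G, rfl⟩
  obtain ⟨G, hFG, hG, hsG⟩ := exists_fg_lTensor_inclusion_eq_zero hF hs0
  have h1 := congr_fun (congr_arg (prodTensorHom ℤ N G) hsG) ⟨G, hG⟩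
  rw [prodTensorHom_lTensor, hs, lTensor_tmul, map_zero, Pi.zero_apply,
    one_tmul_eq_zero_iff_exists_smul_eq] at h1
  obtain ⟨y, hy⟩ := h1
  refine hxG ⟨G, hG⟩ ?_
  rw [smul_right_injective M (hk _) (congr_arg Subtype.val hy).symm]
  exact y.2

theorem Module.free_of_countablyGenerated_of_pureClosure_fg {X : Type*} [AddCommGroup X]
    [IsTorsionFree ℤ X] (hX : ∃ S : Set X, S.Countable ∧ span ℤ S = ⊤)
    (h : ∀ F : Submodule ℤ X, F.FG → (pureClosure F).FG) : Module.Free ℤ X := by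
  obtain ⟨S, hS, hSX⟩ := hX
  obtain ⟨g, hg⟩ := Set.countable_iff_exists_subset_range.mp hS
  set H := fun n => pureClosure (span ℤ (g '' Set.Iio n))
  refine Module.free_of_pure_fg_chain (H := H) ?_ ?_
    (fun n => h _ (fg_span ((Set.finite_Iio n).image g))) (fun n => inferInstance) ?_
  · exact fun m n hmn => pureClosure_mono (span_mono (Set.image_mono (Set.Iio_subset_Iio hmn)))
  · simp [H, pureClosure_bot]
  · refine eq_top_iff.mpr (hSX ▸ span_le.mpr fun x hxS => ?_)
    obtain ⟨i, rfl⟩ := hg hxS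
    exact mem_iSup_of_mem (i + 1)
      (le_pureClosure _ (subset_span ⟨i, Set.mem_Iio.mpr i.lt_succ_self, rfl⟩))

theorem IsMittagLeffler.isAleph1Free [IsTorsionFree ℤ M] (hM : IsMittagLeffler M) :
    IsAleph1Free M := by
  rintro A ⟨S, hS, rfl⟩
  refine Module.free_of_countablyGenerated_of_pureClosure_fg
    ⟨Subtype.val ⁻¹' S, hS.preimage Subtype.val_injective, span_span_coe_preimage⟩ fun F hF => ?_
  refine fg_of_fg_map_injective _ (span ℤ S).injective_subtype
    ((hM.pureClosure_fg (hF.map (span ℤ S).subtype)).of_le ?_)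
  rintro _ ⟨x, ⟨k, hk, hkx⟩, rfl⟩
  exact ⟨k, hk, ⟨_, hkx, rfl⟩⟩

theorem IsAleph1Free.isTorsionFree (h : IsAleph1Free M) : IsTorsionFree ℤ M := by
  refine .of_smul_eq_zero fun k x hkx => ?_
  have := h (span ℤ {x}) ⟨{x}, Set.countable_singleton x, rfl⟩
  have hk : k • (⟨x, mem_span_singleton_self x⟩ : span ℤ {x}) = 0 := Subtype.ext hkx
  exact (smul_eq_zero.mp hk).imp_right (congr_arg Subtype.val)

theorem IsAleph1Free.isMittagLeffler (h : IsAleph1Free M) : IsMittagLeffler M := by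
  have := h.isTorsionFree
  intro ι N _
  rw [coe_zCanonical, injective_iff_map_eq_zero]
  intro t ht
  obtain ⟨F, hF, hFt⟩ :=
    exists_finite_submodule_right_of_setFinite {t} (Set.finite_singleton t)
  obtain ⟨s, rfl⟩ := hFt rfl
  set G := pureClosure F
  have : Countable F := Finsupp.Countable.of_moduleFinite (R := ℤ)
  have : Module.Free ℤ G := h G ⟨G, countable_pureClosure (Set.countable_coe_iff.mp this),
    span_eq G⟩
  have hsG : G.subtype.lTensor _ ((inclusion (le_pureClosure F)).lTensor _ s) =
      F.subtype.lTensor _ s := by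
    rw [← lTensor_comp_apply, subtype_comp_inclusion]
  suffices (inclusion (le_pureClosure F)).lTensor _ s = 0 by rw [← hsG, this, map_zero]
  refine prodTensorHom_injective ℤ N G
    (funext fun i => G.lTensor_subtype_injective_of_isTorsionFree (N i) ?_)
  rw [← prodTensorHom_lTensor, hsG, ht]
  simp

theorem AddMonoid.isTorsionFree_iff_isTorsionFree_int :
    AddMonoid.IsTorsionFree M ↔ Module.IsTorsionFree ℤ M :=
  isAddTorsionFree_iff_not_isOfFinAddOrder.symm.trans
    Module.isTorsionFree_int_iff_isAddTorsionFree.symm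

end MittagLeffler

/-- **Azumaya–Facchini.** An abelian group is torsion-free and Mittag-Leffler if and only if it
is `ℵ₁`-free: every countably generated subgroup is free. -/
theorem abelianGroup_torsionFree_mittagLeffler_iff_aleph1Free (M : Type) [AddCommGroup M] :
    (AddMonoid.IsTorsionFree M ∧
      ∀ (ι : Type) (N : ι → Type) (_ : ∀ i, AddCommGroup (N i)),
        Function.Injective (zCanonical N M)) ↔
      ∀ A : Submodule ℤ M, (∃ S : Set M, S.Countable ∧ Submodule.span ℤ S = A) →
        Module.Free ℤ ↥A := by
  change AddMonoid.IsTorsionFree M ∧ IsMittagLeffler M ↔ IsAleph1Free M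
  rw [AddMonoid.isTorsionFree_iff_isTorsionFree_int]
  exact ⟨fun ⟨_, hM⟩ => hM.isAleph1Free, fun h => ⟨h.isTorsionFree, h.isMittagLeffler⟩⟩
end
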